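/- Let λ be a positive integer, μ = 1/λ, F(ψ) = k/sin²(λψ + ψ₀), G(ψ) = cos(λψ + ψ₀). Then I_λ = (p_r + (1/(λr)) X_L)^λ G is a first integral of H = ½p_r² + (1/r²)(½p_ψ² + F(ψ)), i.e., X_H(I_λ) = 0 on the open set where r > 0 and sin(λψ + ψ₀) ≠ 0. -/

import Mathlib

open Real

/- Phase space coordinates: `x 0 = r`, `x 1 = ψ`, `x 2 = p_r`, `x 3 = p_ψ`. -/

/-- Partial derivative with respect to the `i`-th coordinate. -/
noncomputable def pd (i : Fin 4) (f : (Fin 4 → ℝ) → ℝ) (x : Fin 4 → ℝ) : ℝ :=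
  deriv (fun t => f (Function.update x i t)) (x i)

/-- The angular Hamiltonian `L = ½ p_ψ² + F(ψ)`. -/
noncomputable def Lfun (F : ℝ → ℝ) (x : Fin 4 → ℝ) : ℝ :=
  (1/2) * (x 3)^2 + F (x 1)

/-- The Hamiltonian vector field `X_L = p_ψ ∂/∂ψ − F'(ψ) ∂/∂p_ψ` as an operator. -/
noncomputable def XL (F : ℝ → ℝ) (f : (Fin 4 → ℝ) → ℝ) (x : Fin 4 → ℝ) : ℝ :=
  x 3 * pd 1 f x - deriv F (x 1) * pd 3 f x

/-- The Hamiltonian `H = ½ p_r² + (½ p_ψ² + F(ψ))/r²`. -/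
noncomputable def Hfun (F : ℝ → ℝ) (x : Fin 4 → ℝ) : ℝ :=
  (1/2) * (x 2)^2 + (1 / (x 0)^2) * ((1/2) * (x 3)^2 + F (x 1))

/-- The operator `U = p_r + (μ/r) X_L` (multiplication by `p_r` plus `(μ/r)·X_L`). -/
noncomputable def Uop (μ : ℝ) (F : ℝ → ℝ) (f : (Fin 4 → ℝ) → ℝ) (x : Fin 4 → ℝ) : ℝ :=
  x 2 * f x + (μ / x 0) * XL F f x

/-- The Hamiltonian vector field of `K` applied to `f`. -/
noncomputable def XHam (K f : (Fin 4 → ℝ) → ℝ) (x : Fin 4 → ℝ) : ℝ :=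
  pd 2 K x * pd 0 f x + pd 3 K x * pd 1 f x - pd 0 K x * pd 2 f x - pd 1 K x * pd 3 f x

/-!
Write `θ = λψ + ψ₀`, `C = cos θ` and `S = p_ψ sin θ`. The field `X_L` kills `r`, `p_r` and `L` and
rotates the pair `(C, S)`: `X_L C = -λ S` and `X_L S = 2λ L C`, the latter because `F sin² θ` is
constant. Hence `U^n G = A_n C + B_n S` with coefficients `A_n, B_n` depending on `r, p_r, L` only.
Splitting `X_H = p_r ∂_r + (2L/r³) ∂_{p_r} + X_L / r²`, the radial part sends `(A_n, B_n)` to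
`(n/r²) (-2L B_n, A_n)`, so `X_H (A_n C + B_n S) = ((n - λ)/r²) (A_n S - 2L B_n C)`, which
vanishes for `n = λ`.
-/

open Filter Topology Set

section PartialDerivatives

variable {f g : (Fin 4 → ℝ) → ℝ} {x : Fin 4 → ℝ}

theorem pd_congr_of_eventuallyEq (h : f =ᶠ[𝓝 x] g) (i : Fin 4) : pd i f x = pd i g x := by
  have hline : Tendsto (Function.update x i) (𝓝 (x i)) (𝓝 x) := by
    simpa using ((continuous_const (y := x)).update i continuous_id).tendsto (x i)
  exact Filter.EventuallyEq.deriv_eq (hline.eventually h)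

theorem Uop_congr_of_eventuallyEq {μ : ℝ} {F : ℝ → ℝ} (h : f =ᶠ[𝓝 x] g) :
    Uop μ F f x = Uop μ F g x := by
  simp only [Uop, XL, pd_congr_of_eventuallyEq h, h.eq_of_nhds]

theorem XHam_congr_of_eventuallyEq {K : (Fin 4 → ℝ) → ℝ} (h : f =ᶠ[𝓝 x] g) :
    XHam K f x = XHam K g x := by
  simp only [XHam, pd_congr_of_eventuallyEq h]

theorem pd_eq_fderiv (hf : DifferentiableAt ℝ f x) (i : Fin 4) :
    pd i f x = fderiv ℝ f x (Pi.single i 1) := by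
  rw [← Function.update_eq_self i x] at hf
  exact (hf.hasFDerivAt.comp_hasDerivAt (x i) (hasDerivAt_update x i (x i))).deriv.trans (by simp)

theorem fderiv_apply_eq_sum_pd (hf : DifferentiableAt ℝ f x) (v : Fin 4 → ℝ) :
    fderiv ℝ f x v = ∑ i, v i * pd i f x := by
  conv_lhs => rw [← Finset.univ_sum_single v]
  refine (map_sum _ _ _).trans (Finset.sum_congr rfl fun i _ => ?_)
  rw [pd_eq_fderiv hf, ← smul_eq_mul, ← map_smul, ← Pi.single_smul', smul_eq_mul, mul_one]

theorem XHam_eq_fderiv (K : (Fin 4 → ℝ) → ℝ) (hf : DifferentiableAt ℝ f x) :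
    XHam K f x = fderiv ℝ f x ![pd 2 K x, pd 3 K x, -pd 0 K x, -pd 1 K x] := by
  simp only [XHam, fderiv_apply_eq_sum_pd hf, Fin.sum_univ_four, Matrix.cons_val_zero,
    Matrix.cons_val_one, Matrix.cons_val, neg_mul]
  ring

end PartialDerivatives

/-- `c` times the radial part `p_r ∂_r + (2L/r³) ∂_{p_r}` of `X_H`, plus `s` times `X_L`:
`X_L` is `(c, s) = (0, 1)` and `X_H` is `(c, s) = (1, 1/r²)`. -/
noncomputable def radialAngularField (F : ℝ → ℝ) (c s : ℝ) (x : Fin 4 → ℝ) : Fin 4 → ℝ :=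
  ![c * x 2, s * x 3, c * (2 * Lfun F x / x 0 ^ 3), -(s * deriv F (x 1))]

section HamiltonianFields

variable {F : ℝ → ℝ} {f : (Fin 4 → ℝ) → ℝ} {x : Fin 4 → ℝ}

theorem XL_eq_fderiv (hf : DifferentiableAt ℝ f x) :
    XL F f x = fderiv ℝ f x (radialAngularField F 0 1 x) := by
  simp only [XL, radialAngularField, fderiv_apply_eq_sum_pd hf, Fin.sum_univ_four,
    Matrix.cons_val_zero, Matrix.cons_val_one, Matrix.cons_val, zero_mul, one_mul, zero_add,
    add_zero, neg_mul]
  ring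

theorem differentiableAt_Lfun (hF : DifferentiableAt ℝ F (x 1)) :
    DifferentiableAt ℝ (Lfun F) x := by
  unfold Lfun
  fun_prop

theorem fderiv_Lfun_apply (hF : DifferentiableAt ℝ F (x 1)) (v : Fin 4 → ℝ) :
    fderiv ℝ (Lfun F) x v = x 3 * v 3 + deriv F (x 1) * v 1 := by
  have h : HasFDerivAt (Lfun F) _ x := (((hasFDerivAt_apply 3 x).pow 2).const_mul (1 / 2 : ℝ)).add
    (hF.hasDerivAt.comp_hasFDerivAt x (hasFDerivAt_apply (𝕜 := ℝ) 1 x))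
  rw [h.fderiv]
  simp only [add_apply, smul_apply, ContinuousLinearMap.proj_apply, smul_eq_mul, nsmul_eq_mul]
  ring

theorem fderiv_Lfun_radialAngularField (hF : DifferentiableAt ℝ F (x 1)) (c s : ℝ) :
    fderiv ℝ (Lfun F) x (radialAngularField F c s x) = 0 := by
  simp only [radialAngularField, fderiv_Lfun_apply hF, Matrix.cons_val, Matrix.cons_val_one,
    Matrix.cons_val_zero]
  ring

theorem XHam_Hfun_eq_fderiv (hx : x 0 ≠ 0) (hF : DifferentiableAt ℝ F (x 1))
    (hf : DifferentiableAt ℝ f x) :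
    XHam (Hfun F) f x = fderiv ℝ f x (radialAngularField F 1 (x 0 ^ 2)⁻¹ x) := by
  have hinv := ((hasDerivAt_const (x 0) (1 : ℝ)).div (hasDerivAt_pow 2 (x 0))
    (pow_ne_zero 2 hx)).comp_hasFDerivAt x (hasFDerivAt_apply (𝕜 := ℝ) 0 x)
  have hH : HasFDerivAt (Hfun F) _ x := (((hasFDerivAt_apply 2 x).pow 2).const_mul (1 / 2 : ℝ)).add
    (hinv.mul (differentiableAt_Lfun hF).hasFDerivAt)
  rw [XHam_eq_fderiv _ hf]
  congr 1
  ext i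
  fin_cases i <;>
    simp [pd_eq_fderiv hH.differentiableAt, hH.fderiv, radialAngularField, fderiv_Lfun_apply hF,
      Lfun]
  field_simp

end HamiltonianFields

-- The coefficients of `cos θ` and `p_ψ sin θ` in `U^n G`; they depend on `r`, `p_r`, `L` only.
mutual

noncomputable def cosCoeff (F : ℝ → ℝ) : ℕ → (Fin 4 → ℝ) → ℝ
  | 0 => fun _ => 1
  | n + 1 => fun y => y 2 * cosCoeff F n y + 2 * Lfun F y * (y 0)⁻¹ * sinCoeff F n y

noncomputable def sinCoeff (F : ℝ → ℝ) : ℕ → (Fin 4 → ℝ) → ℝ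
  | 0 => fun _ => 0
  | n + 1 => fun y => y 2 * sinCoeff F n y - (y 0)⁻¹ * cosCoeff F n y

end

section Coefficients

variable {F : ℝ → ℝ} {x : Fin 4 → ℝ}

theorem differentiableAt_coeffs (hx : x 0 ≠ 0) (hF : DifferentiableAt ℝ F (x 1)) (n : ℕ) :
    DifferentiableAt ℝ (cosCoeff F n) x ∧ DifferentiableAt ℝ (sinCoeff F n) x := by
  induction n with
  | zero => simp [cosCoeff, sinCoeff]
  | succ n ih =>
    obtain ⟨hA, hB⟩ := ih
    have hL := differentiableAt_Lfun hF
    rw [cosCoeff, sinCoeff]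
    constructor <;> fun_prop (disch := assumption)

theorem fderiv_coeffs_radialAngularField (hx : x 0 ≠ 0) (hF : DifferentiableAt ℝ F (x 1))
    (c s : ℝ) (n : ℕ) :
    fderiv ℝ (cosCoeff F n) x (radialAngularField F c s x)
        = -(c * (2 * n * Lfun F x / x 0 ^ 2) * sinCoeff F n x) ∧
      fderiv ℝ (sinCoeff F n) x (radialAngularField F c s x)
        = c * (n / x 0 ^ 2) * cosCoeff F n x := by
  induction n with
  | zero => simp [cosCoeff, sinCoeff]
  | succ n ih =>
    obtain ⟨hA, hB⟩ := differentiableAt_coeffs hx hF n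
    have hinv := (hasDerivAt_inv hx).comp_hasFDerivAt x (hasFDerivAt_apply (𝕜 := ℝ) 0 x)
    have hp := hasFDerivAt_apply (𝕜 := ℝ) 2 x
    have hL := (differentiableAt_Lfun hF).hasFDerivAt
    have hA' : HasFDerivAt (cosCoeff F (n + 1)) _ x :=
      (hp.mul hA.hasFDerivAt).add (((hL.const_mul 2).mul hinv).mul hB.hasFDerivAt)
    have hB' : HasFDerivAt (sinCoeff F (n + 1)) _ x :=
      (hp.mul hB.hasFDerivAt).sub (hinv.mul hA.hasFDerivAt)
    rw [hA'.fderiv, hB'.fderiv]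
    simp only [add_apply, sub_apply, smul_apply, ContinuousLinearMap.proj_apply, smul_eq_mul,
      ih.1, ih.2, fderiv_Lfun_radialAngularField hF]
    simp only [radialAngularField, Matrix.cons_val, Matrix.cons_val_zero, Pi.mul_apply,
      Function.comp_apply, cosCoeff, sinCoeff, Nat.cast_add, Nat.cast_one, mul_zero, add_zero]
    constructor <;> field_simp <;> ring

end Coefficients

noncomputable def potential (k lam ψ₀ : ℝ) (ψ : ℝ) : ℝ :=
  k / sin (lam * ψ + ψ₀) ^ 2

noncomputable def ladderForm (F : ℝ → ℝ) (lam ψ₀ : ℝ) (n : ℕ) (y : Fin 4 → ℝ) : ℝ :=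
  cosCoeff F n y * cos (lam * y 1 + ψ₀) + sinCoeff F n y * (y 3 * sin (lam * y 1 + ψ₀))

def regularSet (lam ψ₀ : ℝ) : Set (Fin 4 → ℝ) :=
  {y | y 0 ≠ 0 ∧ sin (lam * y 1 + ψ₀) ≠ 0}

section LadderForm

variable {k lam ψ₀ : ℝ} {x : Fin 4 → ℝ}

theorem isOpen_regularSet : IsOpen (regularSet lam ψ₀) :=
  (isOpen_ne_fun (continuous_apply 0) continuous_const).inter
    (isOpen_ne_fun (by fun_prop) continuous_const)

theorem hasDerivAt_potential {ψ : ℝ} (hs : sin (lam * ψ + ψ₀) ≠ 0) :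
    HasDerivAt (potential k lam ψ₀)
      (-(2 * lam * k * cos (lam * ψ + ψ₀) / sin (lam * ψ + ψ₀) ^ 3)) ψ := by
  have hθ : HasDerivAt (fun t => lam * t + ψ₀) lam ψ := by
    simpa using ((hasDerivAt_id ψ).const_mul lam).add_const ψ₀
  have h : HasDerivAt (potential k lam ψ₀) _ ψ :=
    (hasDerivAt_const ψ k).div (hθ.sin.pow 2) (pow_ne_zero 2 hs)
  refine h.congr_deriv ?_
  field_simp
  ring

theorem differentiableAt_ladderForm (hx : x 0 ≠ 0) (hs : sin (lam * x 1 + ψ₀) ≠ 0) (n : ℕ) :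
    DifferentiableAt ℝ (ladderForm (potential k lam ψ₀) lam ψ₀ n) x := by
  obtain ⟨hA, hB⟩ :=
    differentiableAt_coeffs hx (hasDerivAt_potential (k := k) hs).differentiableAt n
  unfold ladderForm
  fun_prop

theorem fderiv_ladderForm_radialAngularField (hx : x 0 ≠ 0) (hs : sin (lam * x 1 + ψ₀) ≠ 0)
    (c s : ℝ) (n : ℕ) :
    fderiv ℝ (ladderForm (potential k lam ψ₀) lam ψ₀ n) x
        (radialAngularField (potential k lam ψ₀) c s x) =
      (c * n / x 0 ^ 2 - s * lam) *
        (cosCoeff (potential k lam ψ₀) n x * (x 3 * sin (lam * x 1 + ψ₀)) -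
          2 * Lfun (potential k lam ψ₀) x * sinCoeff (potential k lam ψ₀) n x *
            cos (lam * x 1 + ψ₀)) := by
  have hF := hasDerivAt_potential (k := k) hs
  obtain ⟨hA, hB⟩ := differentiableAt_coeffs hx hF.differentiableAt n
  obtain ⟨hA', hB'⟩ := fderiv_coeffs_radialAngularField hx hF.differentiableAt c s n
  have hθ := ((hasFDerivAt_apply (𝕜 := ℝ) 1 x).const_mul lam).add_const ψ₀
  have h : HasFDerivAt (ladderForm (potential k lam ψ₀) lam ψ₀ n) _ x :=
    (hA.hasFDerivAt.mul hθ.cos).add (hB.hasFDerivAt.mul ((hasFDerivAt_apply 3 x).mul hθ.sin))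
  rw [h.fderiv]
  simp only [add_apply, smul_apply, ContinuousLinearMap.proj_apply, smul_eq_mul, hA', hB']
  simp only [radialAngularField, hF.deriv, Lfun, potential, Matrix.cons_val, Matrix.cons_val_zero,
    Matrix.cons_val_one]
  -- `F' sin θ = -2λ F cos θ` is what turns `X_L (p_ψ sin θ)` into `2λ L cos θ`.
  field_simp
  ring

theorem Uop_ladderForm (hlam : lam ≠ 0) (hx : x 0 ≠ 0) (hs : sin (lam * x 1 + ψ₀) ≠ 0)
    (n : ℕ) :
    Uop (1 / lam) (potential k lam ψ₀) (ladderForm (potential k lam ψ₀) lam ψ₀ n) x =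
      ladderForm (potential k lam ψ₀) lam ψ₀ (n + 1) x := by
  rw [Uop, XL_eq_fderiv (differentiableAt_ladderForm hx hs n),
    fderiv_ladderForm_radialAngularField hx hs]
  simp only [ladderForm, cosCoeff, sinCoeff]
  field_simp
  ring

theorem iterate_Uop_eqOn_ladderForm (hlam : lam ≠ 0) (n : ℕ) :
    EqOn ((Uop (1 / lam) (potential k lam ψ₀))^[n] (fun y => cos (lam * y 1 + ψ₀)))
      (ladderForm (potential k lam ψ₀) lam ψ₀ n) (regularSet lam ψ₀) := by
  induction n with
  | zero => intro y _; simp [ladderForm, cosCoeff, sinCoeff]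
  | succ n ih =>
    intro y hy
    rw [Function.iterate_succ_apply', Uop_congr_of_eventuallyEq
      (ih.eventuallyEq_of_mem (isOpen_regularSet.mem_nhds hy)), Uop_ladderForm hlam hy.1 hy.2]

end LadderForm

/-- For a positive integer `λ`, `μ = 1/λ`, `F(ψ) = k/sin²(λψ+ψ₀)`, `G(ψ) = cos(λψ+ψ₀)`,
the function `I_λ = (p_r + (1/(λr))X_L)^λ G` is a first integral of
`H = ½p_r² + (1/r²)(½p_ψ² + F(ψ))`: `X_H(I_λ) = 0` where `r > 0` and `sin(λψ+ψ₀) ≠ 0`. -/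
theorem first_integral_general (lam : ℕ) (hlam : 0 < lam) (k ψ₀ : ℝ)
    (x : Fin 4 → ℝ) (hr : 0 < x 0) (hs : sin (lam * x 1 + ψ₀) ≠ 0) :
    XHam (Hfun (fun ψ => k / (sin (lam * ψ + ψ₀))^2))
      ((Uop (1 / lam) (fun ψ => k / (sin (lam * ψ + ψ₀))^2))^[lam]
        (fun y => cos (lam * y 1 + ψ₀))) x = 0 := by
  change XHam (Hfun (potential k lam ψ₀))
    ((Uop (1 / lam) (potential k lam ψ₀))^[lam] (fun y => cos (lam * y 1 + ψ₀))) x = 0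
  have hx : x ∈ regularSet lam ψ₀ := ⟨hr.ne', hs⟩
  have hI := (iterate_Uop_eqOn_ladderForm (k := k)
    (Nat.cast_ne_zero.mpr hlam.ne') lam).eventuallyEq_of_mem (isOpen_regularSet.mem_nhds hx)
  rw [XHam_congr_of_eventuallyEq hI,
    XHam_Hfun_eq_fderiv hx.1 (hasDerivAt_potential hs).differentiableAt
      (differentiableAt_ladderForm hx.1 hs lam),
    fderiv_ladderForm_radialAngularField hx.1 hs]
  ring
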